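/- arXiv:2008.02724 — 5 statements merged into one kernel-verified Lean document; each statement's English description precedes it below -/
import Mathlib

section
/- Let z : ℝ → ℝ be four times continuously differentiable on a neighborhood of a point t. Then, as τ → 0⁺, the 5-instance finite difference quotient (8·z(t+τ) + z(t) − 6·z(t−τ) − 5·z(t−2τ) + 2·z(t−3τ))/(18τ) differs from z′(t) by O(τ³); equivalently, 8·z(t+τ) + z(t) − 6·z(t−τ) − 5·z(t−2τ) + 2·z(t−3τ) − 18τ·z′(t) = O(τ⁴) as τ → 0. -/
/-!
Taylor expansion to third order with an `O(h⁴)` remainder (Taylor's little-o theorem at order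
four plus the fourth-order term) at each node `t + cτ`, `c ∈ {1, 0, -1, -2, -3}`, turns the
stencil into `∑ₖ (∑ᵢ wᵢ cᵢᵏ) z⁽ᵏ⁾(t) τᵏ / k! + O(τ⁴)`. The weights `8, 1, -6, -5, 2` have
moments `0, 18, 0, 0` for `k = 0, 1, 2, 3`, so only `18 τ z′(t)` survives; dividing by `18τ`
gives the `O(τ³)` bound.
-/

open Asymptotics Filter Topology Finset Nat

variable {E : Type*} [NormedAddCommGroup E] [NormedSpace ℝ E]

theorem taylor_isBigO {f : ℝ → E} {x₀ : ℝ} {n : ℕ} {s : Set ℝ}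
    (hs : Convex ℝ s) (hx₀s : x₀ ∈ s) (hf : ContDiffOn ℝ (n + 1) f s) :
    (fun x ↦ f x - taylorWithinEval f n s x₀ x) =O[𝓝[s] x₀] fun x ↦ (x - x₀) ^ (n + 1) := by
  have hrem := (taylor_isLittleO hs hx₀s (n := n + 1) (by exact_mod_cast hf)).isBigO
  have hterm : (fun x ↦ taylorWithinEval f (n + 1) s x₀ x - taylorWithinEval f n s x₀ x)
      =O[𝓝[s] x₀] fun x ↦ (x - x₀) ^ (n + 1) := by
    simp_rw [taylorWithinEval_succ, add_sub_cancel_left]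
    refine .of_bound (‖((n + 1 : ℝ) * n !)⁻¹‖ * ‖iteratedDerivWithin (n + 1) f s x₀‖)
      (.of_forall fun x ↦ ?_)
    rw [norm_smul, norm_mul]
    exact le_of_eq (by ring)
  exact (hrem.add hterm).congr_left fun x ↦ sub_add_sub_cancel _ _ _

theorem ContDiffAt.taylor_isBigO {f : ℝ → E} {x₀ : ℝ} {n : ℕ}
    (hf : ContDiffAt ℝ (n + 1) f x₀) :
    (fun x ↦ f x - ∑ k ∈ range (n + 1), ((k ! : ℝ)⁻¹ * (x - x₀) ^ k) • iteratedDeriv k f x₀)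
      =O[𝓝 x₀] fun x ↦ (x - x₀) ^ (n + 1) := by
  obtain ⟨u, hu, hfu⟩ := hf.contDiffOn le_rfl (by simp)
  obtain ⟨ε, hε, hball⟩ := Metric.mem_nhds_iff.mp hu
  have hx₀ := Metric.mem_ball_self (x := x₀) hε
  have h := _root_.taylor_isBigO (convex_ball x₀ ε) hx₀ (hfu.mono hball)
  rw [nhdsWithin_eq_nhds.mpr (Metric.ball_mem_nhds x₀ hε)] at h
  refine h.congr_left fun x ↦ ?_
  rw [taylor_within_apply]
  congr! 3 with k
  exact iteratedDerivWithin_of_isOpen Metric.isOpen_ball hx₀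

theorem ContDiffAt.stencil_taylor_isBigO {ι : Type*} (S : Finset ι) (w c : ι → ℝ)
    {f : ℝ → E} {t : ℝ} {n : ℕ} (hf : ContDiffAt ℝ (n + 1) f t) :
    (fun τ ↦ ∑ i ∈ S, w i • f (t + c i * τ) -
        ∑ k ∈ range (n + 1), ((k ! : ℝ)⁻¹ * (∑ i ∈ S, w i * c i ^ k) * τ ^ k) • iteratedDeriv k f t)
      =O[𝓝 0] fun τ ↦ τ ^ (n + 1) := by
  have hnode (i : ι) : (fun τ ↦ f (t + c i * τ) - ∑ k ∈ range (n + 1),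
      ((k ! : ℝ)⁻¹ * (c i * τ) ^ k) • iteratedDeriv k f t) =O[𝓝 0] fun τ ↦ τ ^ (n + 1) := by
    have hlim : Tendsto (fun τ ↦ t + c i * τ) (𝓝 0) (𝓝 t) :=
      (continuous_const.add (continuous_const.mul continuous_id)).tendsto' 0 t (by simp)
    have h := hf.taylor_isBigO.comp_tendsto hlim
    simp only [Function.comp_def, add_sub_cancel_left] at h
    refine h.trans ?_
    simp_rw [mul_pow]
    exact (isBigO_refl _ _).const_mul_left _
  refine (IsBigO.fun_sum (s := S) fun i _ ↦ (hnode i).const_smul_left (w i)).congr_left fun τ ↦ ?_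
  simp only [Pi.smul_apply, smul_sub, Finset.sum_sub_distrib, Finset.smul_sum, smul_smul,
    Finset.sum_mul, Finset.sum_smul, Finset.mul_sum]
  congr 1
  rw [Finset.sum_comm]
  refine Finset.sum_congr rfl fun k _ ↦ Finset.sum_congr rfl fun i _ ↦ ?_
  congr 1
  ring

theorem Asymptotics.IsBigO.div_id_of_pow_succ {l : Filter ℝ} {g : ℝ → ℝ} {n : ℕ}
    (h : g =O[l] fun τ ↦ τ ^ (n + 1)) : (fun τ ↦ g τ / τ) =O[l] fun τ ↦ τ ^ n := by
  refine (h.mul (isBigO_refl (fun τ : ℝ ↦ τ⁻¹) l)).trans (.of_bound 1 (.of_forall fun τ ↦ ?_))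
  rcases eq_or_ne τ 0 with rfl | hτ
  · simp
  · simp [pow_succ, hτ]

/-- Truncation error of the 5-IFD look-ahead finite difference formula of type 2_3:
for `z` four times continuously differentiable near `t`, the difference quotient
`(8z(t+τ) + z(t) - 6z(t-τ) - 5z(t-2τ) + 2z(t-3τ))/(18τ)` differs from `z′(t)` by
`O(τ³)` as `τ → 0⁺`; equivalently the un-divided expression minus `18τ z′(t)` is
`O(τ⁴)` as `τ → 0`. -/
theorem fiveIFD_truncation_error (z : ℝ → ℝ) (t : ℝ) (hz : ContDiffAt ℝ 4 z t) :
    (fun τ : ℝ =>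
        (8 * z (t + τ) + z t - 6 * z (t - τ) - 5 * z (t - 2 * τ) + 2 * z (t - 3 * τ)) / (18 * τ)
          - deriv z t) =O[nhdsWithin 0 (Set.Ioi 0)] (fun τ : ℝ => τ ^ 3) ∧
    (fun τ : ℝ =>
        8 * z (t + τ) + z t - 6 * z (t - τ) - 5 * z (t - 2 * τ) + 2 * z (t - 3 * τ)
          - 18 * τ * deriv z t) =O[nhds 0] (fun τ : ℝ => τ ^ 4) := by
  have hE : (fun τ : ℝ =>
      8 * z (t + τ) + z t - 6 * z (t - τ) - 5 * z (t - 2 * τ) + 2 * z (t - 3 * τ)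
        - 18 * τ * deriv z t) =O[nhds 0] (fun τ : ℝ => τ ^ 4) := by
    refine (ContDiffAt.stencil_taylor_isBigO (n := 3) univ ![8, 1, -6, -5, 2]
      ![1, 0, -1, -2, -3] hz).congr_left fun τ ↦ ?_
    simp [Fin.sum_univ_five, Finset.sum_range_succ, iteratedDeriv_one]
    ring_nf
  refine ⟨?_, hE⟩
  refine ((hE.mono nhdsWithin_le_nhds).div_id_of_pow_succ.const_mul_left 18⁻¹).congr' ?_ .rfl
  filter_upwards [self_mem_nhdsWithin] with τ (hτ : 0 < τ)
  field_simp
end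

section
/- Consider the polynomial p(x) = 8x⁴ + x³ − 6x² − 5x + 2 over ℂ. Then p(1) = 0; every complex root z of p satisfies |z| ≤ 1; z = 1 is the only root of p of modulus 1; and z = 1 is a simple root of p. -/
/-!
`p(z) = (z - 1)(8z³ + 9z² + 3z - 2)`, and the cubic cofactor takes the value `18` at `1`, so `1` is
a simple root. Multiplying the cofactor by `512z³ - 576z² + 456z - 169` gives
`4096z⁶ + 999z² - 1419z + 338`, whose leading coefficient exceeds the sum of the absolute values
of the others; hence the cofactor has no root with `|z| ≥ 1`.
-/

open Finset

theorem norm_lt_one_of_mul_pow_eq_sum {K : Type*} [NormedDivisionRing K] {n : ℕ} {a z : K}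
    (b : Fin n → K) (hz : a * z ^ n = ∑ i, b i * z ^ (i : ℕ)) (hb : ∑ i, ‖b i‖ < ‖a‖) :
    ‖z‖ < 1 := by
  by_contra! hz1
  have : ‖a‖ * ‖z‖ ^ n ≤ (∑ i, ‖b i‖) * ‖z‖ ^ n :=
    calc ‖a‖ * ‖z‖ ^ n = ‖∑ i, b i * z ^ (i : ℕ)‖ := by rw [← hz, norm_mul, norm_pow]
      _ ≤ ∑ i, ‖b i * z ^ (i : ℕ)‖ := norm_sum_le _ _
      _ ≤ ∑ i, ‖b i‖ * ‖z‖ ^ n := sum_le_sum fun i _ => by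
          rw [norm_mul, norm_pow]; gcongr; exact i.is_lt.le
      _ = (∑ i, ‖b i‖) * ‖z‖ ^ n := (sum_mul ..).symm
  exact hb.not_ge (le_of_mul_le_mul_right this (by positivity))

theorem norm_lt_one_of_cubic_eq_zero {z : ℂ} (hz : 8 * z ^ 3 + 9 * z ^ 2 + 3 * z - 2 = 0) :
    ‖z‖ < 1 := by
  refine norm_lt_one_of_mul_pow_eq_sum (a := 4096) ![-338, 1419, -999, 0, 0, 0] ?_ ?_
  · have h : 4096 * z ^ 6 = -338 + (1419 * z - 999 * z ^ 2) := by
      linear_combination (512 * z ^ 3 - 576 * z ^ 2 + 456 * z - 169) * hz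
    simpa [Fin.sum_univ_succ, sub_eq_add_neg] using h
  · norm_num [Fin.sum_univ_succ]

theorem deriv_sub_mul_self {𝕜 : Type*} [NontriviallyNormedField 𝕜] {f : 𝕜 → 𝕜} {a : 𝕜}
    (hf : DifferentiableAt 𝕜 f a) : deriv (fun z => (z - a) * f z) a = f a := by
  rw [deriv_fun_mul (by fun_prop) hf]
  simp

/-- The characteristic polynomial `p(x) = 8x⁴ + x³ - 6x² - 5x + 2` of the 5-IFD
formula satisfies `p(1) = 0`; all its complex roots lie in the closed unit disk;
`1` is its only root of modulus one; and `1` is a simple root (`p′(1) ≠ 0`). -/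
theorem fiveIFD_characteristic_polynomial_convergent
    (p : ℂ → ℂ) (hp : ∀ x, p x = 8 * x ^ 4 + x ^ 3 - 6 * x ^ 2 - 5 * x + 2) :
    p 1 = 0 ∧
    (∀ z : ℂ, p z = 0 → ‖z‖ ≤ 1) ∧
    (∀ z : ℂ, p z = 0 → ‖z‖ = 1 → z = 1) ∧
    deriv p 1 ≠ 0 := by
  have hfactor : p = fun z => (z - 1) * (8 * z ^ 3 + 9 * z ^ 2 + 3 * z - 2) := by
    funext z; rw [hp]; ring
  have hroots : ∀ z, p z = 0 → z = 1 ∨ ‖z‖ < 1 := by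
    intro z hz
    rcases mul_eq_zero.mp (hfactor ▸ hz) with h | h
    · exact .inl (sub_eq_zero.mp h)
    · exact .inr (norm_lt_one_of_cubic_eq_zero h)
  refine ⟨by simp [hfactor], ?_, ?_, ?_⟩
  · intro z hz
    rcases hroots z hz with rfl | h
    exacts [norm_one.le, h.le]
  · intro z hz hz1
    exact (hroots z hz).resolve_right hz1.not_lt
  · rw [hfactor, deriv_sub_mul_self (by fun_prop)]
    norm_num
end

section
/- Let A ∈ ℂⁿˣⁿ, set H = (A + A*)/2 and K = (A − A*)/(2i), and define the Hermitian matrix flow F(t) = cos(t)·H + sin(t)·K for t ∈ ℝ. Let κ be a type, b : Fin n → κ a block labeling, and call an n×n matrix M block diagonal (with respect to b) if M p q = 0 whenever b p ≠ b q. Let X ∈ ℂⁿˣⁿ be unitary and let t₁, t₂ ∈ ℝ with sin(t₂ − t₁) ≠ 0. If both X*·F(t₁)·X and X*·F(t₂)·X are block diagonal with respect to b, then X*·F(t)·X is block diagonal with respect to b for every t ∈ ℝ, and X*·A·X is also block diagonal with respect to b. -/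
open Matrix

/-- Uniform unitary block diagonalization of the hermitean matrix flow
`F(t) = cos(t)·H + sin(t)·K` with `H = (A+A*)/2`, `K = (A-A*)/(2i)`:
if a unitary `X` block diagonalizes `F(t₁)` and `F(t₂)` (with
`sin(t₂ - t₁) ≠ 0`) into the same block pattern `b`, then `X` block
diagonalizes every `F(t)` and also `A` itself. -/
theorem flow_block_diagonalization
    {n : ℕ} {κ : Type*} (b : Fin n → κ)
    (A H K : Matrix (Fin n) (Fin n) ℂ)
    (hH : H = (2 : ℂ)⁻¹ • (A + Aᴴ))
    (hK : K = (2 * Complex.I)⁻¹ • (A - Aᴴ))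
    (F : ℝ → Matrix (Fin n) (Fin n) ℂ)
    (hF : ∀ t : ℝ, F t = (Real.cos t : ℂ) • H + (Real.sin t : ℂ) • K)
    (X : Matrix (Fin n) (Fin n) ℂ) (hX : X ∈ Matrix.unitaryGroup (Fin n) ℂ)
    (t₁ t₂ : ℝ) (ht : Real.sin (t₂ - t₁) ≠ 0)
    (h1 : ∀ p q : Fin n, b p ≠ b q → (Xᴴ * F t₁ * X) p q = 0)
    (h2 : ∀ p q : Fin n, b p ≠ b q → (Xᴴ * F t₂ * X) p q = 0) :
    (∀ t : ℝ, ∀ p q : Fin n, b p ≠ b q → (Xᴴ * F t * X) p q = 0) ∧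
    (∀ p q : Fin n, b p ≠ b q → (Xᴴ * A * X) p q = 0) := by
  -- entrywise linearity of conjugation
  have key : ∀ (t : ℝ) (p q : Fin n),
      (Xᴴ * F t * X) p q
        = (Real.cos t : ℂ) * (Xᴴ * H * X) p q
          + (Real.sin t : ℂ) * (Xᴴ * K * X) p q := by
    intro t p q
    rw [hF t]
    simp [Matrix.mul_add, Matrix.add_mul, Matrix.mul_smul, Matrix.smul_mul,
      Matrix.add_apply, Matrix.smul_apply, smul_eq_mul]
  have hA : A = H + Complex.I • K := by
    rw [hH, hK]
    ext i j
    simp only [Matrix.add_apply, Matrix.smul_apply, Matrix.sub_apply, smul_eq_mul]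
    have hI := Complex.I_ne_zero
    field_simp
    ring_nf
  -- from the two hypotheses, entries of conjugated H and K vanish
  have hHK : ∀ p q : Fin n, b p ≠ b q →
      (Xᴴ * H * X) p q = 0 ∧ (Xᴴ * K * X) p q = 0 := by
    intro p q hpq
    have e1 := h1 p q hpq
    have e2 := h2 p q hpq
    rw [key t₁ p q] at e1
    rw [key t₂ p q] at e2
    set c₁ := (Xᴴ * H * X) p q
    set c₂ := (Xᴴ * K * X) p q
    have hdet : ((Real.sin (t₂ - t₁) : ℝ) : ℂ) ≠ 0 := by
      exact_mod_cast ht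
    have hs : ((Real.sin (t₂ - t₁) : ℝ) : ℂ)
        = (Real.sin t₂ : ℂ) * (Real.cos t₁ : ℂ)
          - (Real.cos t₂ : ℂ) * (Real.sin t₁ : ℂ) := by
      rw [Real.sin_sub]; push_cast; ring
    constructor
    · have : ((Real.sin (t₂ - t₁) : ℝ) : ℂ) * c₁ = 0 := by
        rw [hs]
        linear_combination (Real.sin t₂ : ℂ) * e1 - (Real.sin t₁ : ℂ) * e2
      exact (mul_eq_zero.mp this).resolve_left hdet
    · have : ((Real.sin (t₂ - t₁) : ℝ) : ℂ) * c₂ = 0 := by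
        rw [hs]
        linear_combination (Real.cos t₁ : ℂ) * e2 - (Real.cos t₂ : ℂ) * e1
      exact (mul_eq_zero.mp this).resolve_left hdet
  constructor
  · intro t p q hpq
    rw [key t p q, (hHK p q hpq).1, (hHK p q hpq).2]
    ring
  · intro p q hpq
    have : (Xᴴ * A * X) p q
        = (Xᴴ * H * X) p q + Complex.I * (Xᴴ * K * X) p q := by
      rw [hA]
      simp [Matrix.mul_add, Matrix.add_mul, Matrix.mul_smul, Matrix.smul_mul,
        Matrix.add_apply, Matrix.smul_apply, smul_eq_mul]
    rw [this, (hHK p q hpq).1, (hHK p q hpq).2]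
    ring
end

section
/- Let A : ℝ → ℂⁿˣⁿ, x : ℝ → ℂⁿ and b : ℝ → ℂⁿ be differentiable at t, suppose A(t) is invertible, and let η ∈ ℝ. Define the error function e(s) = A(s)·x(s) − b(s). Then e′(t) = −η·e(t) holds if and only if x′(t) = A(t)⁻¹·( −A′(t)·x(t) + b′(t) + η·b(t) ) − η·x(t). -/
open Matrix

theorem Matrix.mulVec_eq_iff_eq_inv_mulVec {n R : Type*} [Fintype n] [DecidableEq n] [CommRing R]
    {A : Matrix n n R} (hA : IsUnit A) {v w : n → R} : A *ᵥ v = w ↔ v = A⁻¹ *ᵥ w := by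
  have hdet : IsUnit A.det := (isUnit_iff_isUnit_det A).mp hA
  constructor
  · rintro rfl
    rw [mulVec_mulVec, nonsing_inv_mul _ hdet, one_mulVec]
  · rintro rfl
    rw [mulVec_mulVec, mul_nonsing_inv _ hdet, one_mulVec]

theorem hasDerivAt_mulVec {𝕜 𝔸 m n : Type*} [NontriviallyNormedField 𝕜] [NormedRing 𝔸]
    [NormedAlgebra 𝕜 𝔸] [Fintype m] [Fintype n] {A : 𝕜 → Matrix m n 𝔸} {x : 𝕜 → n → 𝔸}
    {A' : Matrix m n 𝔸} {x' : n → 𝔸} {t : 𝕜}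
    (hA : ∀ i j, HasDerivAt (fun s => A s i j) (A' i j) t) (hx : HasDerivAt x x' t) :
    HasDerivAt (fun s => A s *ᵥ x s) (A' *ᵥ x t + A t *ᵥ x') t := by
  refine hasDerivAt_pi.2 fun i => ?_
  simpa [mulVec, dotProduct, Finset.sum_add_distrib] using
    HasDerivAt.fun_sum fun j _ => (hA i j).mul (hasDerivAt_pi.1 hx j)

theorem Matrix.neg_smul_residual_eq_iff {n R : Type*} [Fintype n] [DecidableEq n] [CommRing R]
    {A A' : Matrix n n R} (hA : IsUnit A) (c : R) (x x' b b' : n → R) :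
    -c • (A *ᵥ x - b) = A' *ᵥ x + A *ᵥ x' - b' ↔
      x' = A⁻¹ *ᵥ (-(A' *ᵥ x) + b' + c • b) - c • x := by
  rw [eq_sub_iff_add_eq (a := x'), ← mulVec_eq_iff_eq_inv_mulVec hA, mulVec_add, mulVec_smul]
  constructor <;> intro h <;> linear_combination (norm := module) -h

/-- ZNN derivation for time-varying linear equations `A(t)x(t) = b(t)`:
with error function `e(s) = A(s)x(s) - b(s)` and `A(t)` invertible, the decay
equation `e′(t) = -η e(t)` holds iff
`x′(t) = A(t)⁻¹(-A′(t)x(t) + b′(t) + η b(t)) - η x(t)`.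
All derivatives are entrywise in the real parameter `t`. -/
theorem znn_time_varying_linear_equations
    {n : ℕ} (t η : ℝ)
    (A : ℝ → Matrix (Fin n) (Fin n) ℂ) (x b : ℝ → (Fin n → ℂ))
    (A' : Matrix (Fin n) (Fin n) ℂ) (x' b' : Fin n → ℂ)
    (hA : ∀ i j : Fin n, HasDerivAt (fun s => A s i j) (A' i j) t)
    (hx : ∀ i : Fin n, HasDerivAt (fun s => x s i) (x' i) t)
    (hb : ∀ i : Fin n, HasDerivAt (fun s => b s i) (b' i) t)
    (hinv : IsUnit (A t))
    (e : ℝ → (Fin n → ℂ)) (he : ∀ s, e s = A s *ᵥ x s - b s) :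
    (∀ i : Fin n, HasDerivAt (fun s => e s i) (-(η : ℂ) * e t i) t) ↔
      x' = (A t)⁻¹ *ᵥ (-(A' *ᵥ x t) + b' + (η : ℂ) • b t) - (η : ℂ) • x t := by
  have hderiv : HasDerivAt e (A' *ᵥ x t + A t *ᵥ x' - b') t := by
    rw [funext he]
    exact (hasDerivAt_mulVec hA (hasDerivAt_pi.2 hx)).sub (hasDerivAt_pi.2 hb)
  have hdecay : (∀ i : Fin n, HasDerivAt (fun s => e s i) (-(η : ℂ) * e t i) t) ↔
      -(η : ℂ) • e t = A' *ᵥ x t + A t *ᵥ x' - b' :=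
    hasDerivAt_pi.symm.trans ⟨fun h => h.unique hderiv, fun h => hderiv.congr_deriv h.symm⟩
  rw [hdecay, he t]
  exact neg_smul_residual_eq_iff hinv _ _ _ _ _
end

section
/- Let A : ℝ → ℂⁿˣⁿ and X : ℝ → ℂⁿˣⁿ be differentiable at t, suppose X(t) is invertible, and let η ∈ ℝ. Define the error function E(s) = A(s) − X(s)⁻¹. Then E′(t) = −η·E(t) holds if and only if X′(t) = −X(t)·A′(t)·X(t) − η·X(t)·A(t)·X(t) + η·X(t). -/
/-! Differentiating `E = A - X⁻¹` with `(X⁻¹)' = -X⁻¹ X' X⁻¹` gives `E' = A' + X⁻¹ X' X⁻¹`;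
conjugating the decay equation `E' = -η E` by the invertible `X` solves it for `X'`. -/

open Matrix

theorem Matrix.hasDerivAt_iff {𝕜 m n α : Type*} [NontriviallyNormedField 𝕜] [Fintype m]
    [Fintype n] [NormedAddCommGroup α] [NormedSpace 𝕜 α] {f : 𝕜 → Matrix m n α}
    {f' : Matrix m n α} {x : 𝕜} :
    HasDerivAt f f' x ↔ ∀ i j, HasDerivAt (fun s => f s i j) (f' i j) x :=
  hasDerivAt_pi.trans (forall_congr' fun _ => hasDerivAt_pi)

theorem HasDerivAt.ringInverse {𝕜 R : Type*} [NontriviallyNormedField 𝕜] [NormedRing R]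
    [NormedAlgebra 𝕜 R] [HasSummableGeomSeries R] {h : 𝕜 → R} {h' : R} {x : 𝕜}
    (hh : HasDerivAt h h' x) (hx : IsUnit (h x)) :
    HasDerivAt (fun s => Ring.inverse (h s))
      (-(Ring.inverse (h x) * h' * Ring.inverse (h x))) x := by
  obtain ⟨u, hu⟩ := hx
  have hinv : HasFDerivAt Ring.inverse (-ContinuousLinearMap.mulLeftRight 𝕜 R ↑u⁻¹ ↑u⁻¹) (h x) :=
    hu ▸ hasFDerivAt_ringInverse u
  rw [← hu, Ring.inverse_unit]
  simpa [Function.comp_def, mul_assoc] using hinv.comp_hasDerivAt x hh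

section MatrixNorm

-- `HasDerivAt` only sees the topology, so any complete algebra norm on matrices will do.
attribute [local instance] Matrix.linftyOpNormedAddCommGroup Matrix.linftyOpNormedSpace
  Matrix.linftyOpNormedRing Matrix.linftyOpNormedAlgebra

variable {𝕜 n K : Type*} [NontriviallyNormedField 𝕜] [Fintype n] [DecidableEq n]
  [NormedField K] [CompleteSpace K] [NormedAlgebra 𝕜 K]
  {X : 𝕜 → Matrix n n K} {X' : Matrix n n K} {t : 𝕜}

theorem HasDerivAt.matrix_inv (hX : HasDerivAt X X' t) (hinv : IsUnit (X t)) :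
    HasDerivAt (fun s => (X s)⁻¹) (-((X t)⁻¹ * X' * (X t)⁻¹)) t := by
  -- Instance search does not identify the `linftyOp` uniformity with the product one.
  have : HasSummableGeomSeries (Matrix n n K) :=
    @instHasSummableGeomSeriesOfCompleteSpace _ _ (Matrix.instCompleteSpace n n K)
  have h := hX.ringInverse hinv
  simp only [← nonsing_inv_eq_ringInverse] at h
  exact h

theorem HasDerivAt.sub_matrix_inv {A : 𝕜 → Matrix n n K} {A' : Matrix n n K}
    (hA : HasDerivAt A A' t) (hX : HasDerivAt X X' t) (hinv : IsUnit (X t)) :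
    HasDerivAt (fun s => A s - (X s)⁻¹) (A' + (X t)⁻¹ * X' * (X t)⁻¹) t := by
  rw [← sub_neg_eq_add]
  exact hA.sub (hX.matrix_inv hinv)

end MatrixNorm

theorem Units.inv_mul_mul_inv_eq_iff {R : Type*} [Monoid R] (u : Rˣ) (x y : R) :
    ↑u⁻¹ * x * ↑u⁻¹ = y ↔ x = ↑u * y * ↑u := by
  rw [Units.mul_inv_eq_iff_eq_mul, Units.inv_mul_eq_iff_eq_mul, mul_assoc]

theorem Units.add_inv_mul_mul_inv_eq_smul_sub_inv_iff {S R : Type*} [CommRing S] [Ring R]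
    [Algebra S R] (u : Rˣ) (c : S) (a a' x' : R) :
    a' + ↑u⁻¹ * x' * ↑u⁻¹ = -c • (a - ↑u⁻¹) ↔
      x' = -(↑u * a' * ↑u) - c • (↑u * a * ↑u) + c • (↑u : R) := by
  rw [← eq_sub_iff_add_eq', u.inv_mul_mul_inv_eq_iff]
  simp only [mul_sub, sub_mul, mul_smul_comm, smul_mul_assoc, Units.mul_inv, one_mul]
  exact Iff.of_eq (congrArg (x' = ·) (by module))

/-- ZNN derivation for time-varying matrix inversion: with error function
`E(s) = A(s) - X(s)⁻¹` and `X(t)` invertible, the decay equation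
`E′(t) = -η E(t)` holds iff
`X′(t) = -X(t)A′(t)X(t) - η X(t)A(t)X(t) + η X(t)`.
All derivatives are entrywise in the real parameter `t`. -/
theorem znn_time_varying_matrix_inverse
    {n : ℕ} (t η : ℝ)
    (A X : ℝ → Matrix (Fin n) (Fin n) ℂ)
    (A' X' : Matrix (Fin n) (Fin n) ℂ)
    (hA : ∀ i j : Fin n, HasDerivAt (fun s => A s i j) (A' i j) t)
    (hX : ∀ i j : Fin n, HasDerivAt (fun s => X s i j) (X' i j) t)
    (hinv : IsUnit (X t))
    (E : ℝ → Matrix (Fin n) (Fin n) ℂ) (hE : ∀ s, E s = A s - (X s)⁻¹) :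
    (∀ i j : Fin n, HasDerivAt (fun s => E s i j) (-(η : ℂ) * E t i j) t) ↔
      X' = -(X t * A' * X t) - (η : ℂ) • (X t * A t * X t) + (η : ℂ) • X t := by
  have hE' : HasDerivAt E (A' + (X t)⁻¹ * X' * (X t)⁻¹) t :=
    funext hE ▸ (Matrix.hasDerivAt_iff.2 hA).sub_matrix_inv (Matrix.hasDerivAt_iff.2 hX) hinv
  have hdecay : (∀ i j, HasDerivAt (fun s => E s i j) (-(η : ℂ) * E t i j) t) ↔
      A' + (X t)⁻¹ * X' * (X t)⁻¹ = -(η : ℂ) • (A t - (X t)⁻¹) := by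
    rw [← hE t]
    exact ⟨fun h => Matrix.ext fun i j => (Matrix.hasDerivAt_iff.1 hE' i j).unique (h i j),
      fun h => (Matrix.hasDerivAt_iff (f' := -(η : ℂ) • E t)).1 (h ▸ hE')⟩
  have hsolve := hinv.unit.add_inv_mul_mul_inv_eq_smul_sub_inv_iff (η : ℂ) (A t) A' X'
  rw [coe_units_inv, IsUnit.unit_spec] at hsolve
  exact hdecay.trans hsolve
end
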